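/- Let n ≥ 1 and q a prime power. For every non-scalar matrix M ∈ M_{n+1}(F_q), the quantity N₁ − |Λ₁ ∩ [M^⊥]|, which equals q^{n−1}(q^{n+1}−1)/(q−1) − q^{n−1}θ_M, is minimized exactly when θ_M = (q^n − 1)/(q−1) + 1, giving minimum value q^{2n−1} − q^{n−1}. -/

import Mathlib

/-!
The nonzero left eigenvectors of `M` form the disjoint union of the punctured eigenspaces of
`ξ ↦ ξ ᵥ* M`, so there are `∑_c (q ^ g_c - 1)` of them, where the eigenspace dimensions satisfy
`g_c ≤ n` (as `M` is not scalar) and `∑_c g_c ≤ n + 1` (as eigenspaces are independent).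
Since `x ↦ q ^ x - 1` is superadditive and `q ^ a + q ^ b ≤ q ^ (a + b - 1) + q` for `a, b ≥ 1`,
that sum is largest for the dimensions `(n, 1)`, giving at most `q ^ n + q - 2` eigenvectors.
The weight minus its claimed minimum is `q ^ (n - 1)` times the gap to this bound.
-/

open Matrix Module Function

theorem Nat.pow_add_pow_le_pow_add_add_one {q : ℕ} (hq : 1 ≤ q) (a b : ℕ) :
    q ^ a + q ^ b ≤ q ^ (a + b) + 1 := by
  have ha := Nat.one_le_pow a q hq
  have hb := Nat.one_le_pow b q hq
  rw [pow_add]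
  nlinarith

theorem Nat.pow_add_pow_le_pow_add_sub_one_add {q : ℕ} (hq : 1 ≤ q) {a b : ℕ} (ha : 1 ≤ a)
    (hb : 1 ≤ b) : q ^ a + q ^ b ≤ q ^ (a + b - 1) + q := by
  obtain ⟨a, rfl⟩ := Nat.exists_eq_add_of_le' ha
  obtain ⟨b, rfl⟩ := Nat.exists_eq_add_of_le' hb
  have := Nat.pow_add_pow_le_pow_add_add_one hq a b
  rw [show a + 1 + (b + 1) - 1 = a + b + 1 by omega, pow_succ, pow_succ, pow_succ]
  nlinarith

theorem Finset.sum_pow_sub_one_le {ι : Type*} {q : ℕ} (hq : 1 ≤ q) (s : Finset ι) (d : ι → ℕ) :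
    ∑ i ∈ s, (q ^ d i - 1) ≤ q ^ (∑ i ∈ s, d i) - 1 := by
  classical
  induction s using Finset.induction_on with
  | empty => simp
  | insert a s ha ih =>
    rw [Finset.sum_insert ha, Finset.sum_insert ha]
    have := Nat.pow_add_pow_le_pow_add_add_one hq (d a) (∑ i ∈ s, d i)
    have := Nat.one_le_pow (d a) q hq
    have := Nat.one_le_pow (∑ i ∈ s, d i) q hq
    omega

theorem Finset.sum_pow_sub_one_le_pow_add_sub_two {ι : Type*} {q n : ℕ} (hq : 1 ≤ q)
    (s : Finset ι) (d : ι → ℕ) (hd : ∀ i ∈ s, d i ≤ n) (hsum : ∑ i ∈ s, d i ≤ n + 1) :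
    ∑ i ∈ s, (q ^ d i - 1) ≤ q ^ n + q - 2 := by
  classical
  rcases s.eq_empty_or_nonempty with rfl | hs
  · simp
  obtain ⟨a, ha, hmax⟩ := s.exists_max_image d hs
  rw [← Finset.add_sum_erase s _ ha]
  rw [← Finset.add_sum_erase s _ ha] at hsum
  have hrest := (s.erase a).sum_pow_sub_one_le hq d
  set r := ∑ i ∈ s.erase a, d i
  have hqa : q ^ d a ≤ q ^ n := Nat.pow_le_pow_right hq (hd a ha)
  have := Nat.one_le_pow (d a) q hq
  have := Nat.one_le_pow r q hq
  rcases Nat.eq_zero_or_pos r with hr0 | hr0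
  · rw [hr0, pow_zero, Nat.sub_self] at hrest
    omega
  have hda : 1 ≤ d a := by
    obtain ⟨b, hb, hdb⟩ := Finset.exists_ne_zero_of_sum_ne_zero hr0.ne'
    exact (Nat.one_le_iff_ne_zero.2 hdb).trans (hmax b (Finset.mem_of_mem_erase hb))
  have hmix := Nat.pow_add_pow_le_pow_add_sub_one_add hq hda hr0
  have hpow : q ^ (d a + r - 1) ≤ q ^ n := Nat.pow_le_pow_right hq (by omega)
  omega

theorem iSupIndep.sum_finrank_le {K V ι : Type*} [DivisionRing K] [AddCommGroup V] [Module K V]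
    [FiniteDimensional K V] [Fintype ι] {p : ι → Submodule K V} (h : iSupIndep p) :
    ∑ i, finrank K (p i) ≤ finrank K V := by
  classical
  rw [← finrank_directSum]
  exact LinearMap.finrank_le_finrank_of_injective h.dfinsupp_lsum_injective

theorem Module.End.eq_smul_one_of_eigenspace_eq_top {R V : Type*} [CommRing R] [AddCommGroup V]
    [Module R V] {f : End R V} {c : R} (h : f.eigenspace c = ⊤) : f = c • 1 := by
  ext v
  exact Module.End.mem_eigenspace_iff.1 (h ▸ Submodule.mem_top)

theorem Module.End.finrank_eigenspace_lt {K V : Type*} [Field K] [AddCommGroup V] [Module K V]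
    [FiniteDimensional K V] {f : End K V} (hf : ∀ c : K, f ≠ c • 1) (c : K) :
    finrank K (f.eigenspace c) < finrank K V :=
  Submodule.finrank_lt fun h ↦ hf c (eq_smul_one_of_eigenspace_eq_top h)

theorem Module.End.ncard_eigenvectors {K V : Type*} [Field K] [Fintype K] [AddCommGroup V]
    [Module K V] [FiniteDimensional K V] (f : End K V) :
    {v : V | v ≠ 0 ∧ ∃ c : K, f v = c • v}.ncard
      = ∑ c : K, (Fintype.card K ^ finrank K (f.eigenspace c) - 1) := by
  have : Finite V := Module.finite_of_finite K
  have hunion : {v : V | v ≠ 0 ∧ ∃ c : K, f v = c • v}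
      = ⋃ c : K, (f.eigenspace c : Set V) \ {0} := by
    ext v
    simp [and_comm]
  have hdisj : Pairwise (Disjoint on fun c : K ↦ (f.eigenspace c : Set V) \ {0}) := by
    intro c d hcd
    refine Set.disjoint_left.2 fun v hc hd ↦ hc.2 ?_
    exact Submodule.disjoint_def.1 (f.eigenspaces_iSupIndep.pairwiseDisjoint hcd) v hc.1 hd.1
  rw [hunion, Set.ncard_iUnion_of_finite (fun _ ↦ Set.toFinite _) hdisj,
    finsum_eq_sum_of_fintype]
  refine Finset.sum_congr rfl fun c _ ↦ ?_
  rw [Set.ncard_sdiff_singleton_of_mem (Submodule.zero_mem _), ← Nat.card_coe_set_eq,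
    SetLike.coe_sort_coe, Module.natCard_eq_pow_finrank (K := K), Nat.card_eq_fintype_card]

theorem Matrix.eq_smul_one_of_vecMulLinear_eq {K m : Type*} [Field K] [Fintype m] [DecidableEq m]
    {M : Matrix m m K} {c : K} (h : M.vecMulLinear = c • 1) : M = c • 1 := by
  rw [ext_iff_vecMul]
  intro v
  simpa [vecMul_smul] using LinearMap.congr_fun h v

theorem Matrix.ncard_left_eigenvectors_le_of_ne_smul_one {K : Type*} [Field K] [Fintype K]
    {n : ℕ} {M : Matrix (Fin (n + 1)) (Fin (n + 1)) K} (hM : ∀ c : K, M ≠ c • 1) :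
    {ξ : Fin (n + 1) → K | ξ ≠ 0 ∧ ∃ c : K, ξ ᵥ* M = c • ξ}.ncard
      ≤ Fintype.card K ^ n + Fintype.card K - 2 := by
  have hf : ∀ c : K, M.vecMulLinear ≠ c • 1 := fun c h ↦ hM c (eq_smul_one_of_vecMulLinear_eq h)
  have hdim : finrank K (Fin (n + 1) → K) = n + 1 := by simp
  refine (Module.End.ncard_eigenvectors M.vecMulLinear).trans_le <|
    Finset.sum_pow_sub_one_le_pow_add_sub_two Fintype.card_pos _ _ (fun c _ ↦ ?_) ?_
  · have := Module.End.finrank_eigenspace_lt hf c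
    omega
  · have := (Module.End.eigenspaces_iSupIndep M.vecMulLinear).sum_finrank_le
    omega

theorem weight_sub_minimum_eq (Q x : ℤ) (n : ℕ) :
    Q ^ (n - 1) * (Q ^ (n + 1) - 1) - Q ^ (n - 1) * x - (Q - 1) * (Q ^ (2 * n - 1) - Q ^ (n - 1))
      = Q ^ (n - 1) * (Q ^ n + Q - 2 - x) := by
  rcases n with _ | n
  · ring
  · rw [show 2 * (n + 1) - 1 = 2 * n + 1 by omega, Nat.add_sub_cancel]
    ring

/-- Multiplied through by `q - 1`: the set counted has `(q - 1) θ_M` elements. -/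
theorem minimum_distance_Lambda_one_general {n : ℕ}
    {F : Type*} [Field F] [Fintype F]
    (M : Matrix (Fin (n + 1)) (Fin (n + 1)) F)
    (hM : ∀ c : F, M ≠ c • (1 : Matrix (Fin (n + 1)) (Fin (n + 1)) F)) :
    (((Fintype.card F : ℤ)) ^ (n - 1) * ((Fintype.card F : ℤ) ^ (n + 1) - 1)
        - (Fintype.card F : ℤ) ^ (n - 1) *
          (Set.ncard {ξ : Fin (n + 1) → F | ξ ≠ 0 ∧ ∃ c : F, Matrix.vecMul ξ M = c • ξ} : ℤ)
      ≥ ((Fintype.card F : ℤ) - 1) *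
          ((Fintype.card F : ℤ) ^ (2 * n - 1) - (Fintype.card F : ℤ) ^ (n - 1))) ∧
    (((Fintype.card F : ℤ)) ^ (n - 1) * ((Fintype.card F : ℤ) ^ (n + 1) - 1)
        - (Fintype.card F : ℤ) ^ (n - 1) *
          (Set.ncard {ξ : Fin (n + 1) → F | ξ ≠ 0 ∧ ∃ c : F, Matrix.vecMul ξ M = c • ξ} : ℤ)
      = ((Fintype.card F : ℤ) - 1) *
          ((Fintype.card F : ℤ) ^ (2 * n - 1) - (Fintype.card F : ℤ) ^ (n - 1))
      ↔ Set.ncard {ξ : Fin (n + 1) → F | ξ ≠ 0 ∧ ∃ c : F, Matrix.vecMul ξ M = c • ξ}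
          = (Fintype.card F) ^ n + Fintype.card F - 2) := by
  set q := Fintype.card F
  set ν := Set.ncard {ξ : Fin (n + 1) → F | ξ ≠ 0 ∧ ∃ c : F, Matrix.vecMul ξ M = c • ξ}
  have hq : 1 ≤ q := Fintype.card_pos
  have hν : ν ≤ q ^ n + q - 2 := M.ncard_left_eigenvectors_le_of_ne_smul_one hM
  have hcast : ((q ^ n + q - 2 : ℕ) : ℤ) = (q : ℤ) ^ n + q - 2 := by
    have := Nat.one_le_pow n q hq
    push_cast [show 2 ≤ q ^ n + q by omega]
    ring
  have hνℤ : (ν : ℤ) ≤ (q : ℤ) ^ n + q - 2 := hcast ▸ Nat.cast_le.2 hν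
  have hpos : (0 : ℤ) < (q : ℤ) ^ (n - 1) := by positivity
  rw [ge_iff_le, ← sub_nonneg, ← sub_eq_zero, weight_sub_minimum_eq, ← Nat.cast_inj (R := ℤ),
    hcast]
  refine ⟨mul_nonneg hpos.le (by linarith), ?_⟩
  rw [mul_eq_zero, or_iff_right hpos.ne', sub_eq_zero, eq_comm]

/-- Among non-scalar matrices `M`, the weight `q^{n-1}(q^{n+1}-1)/(q-1) - q^{n-1} θ_M`
(stated multiplied through by `q - 1`, with `ν_M = (q-1)θ_M` the number of left eigenvectors
of `M`) is at least `(q-1)(q^{2n-1} - q^{n-1})`, with equality exactly when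
`θ_M = (q^n - 1)/(q - 1) + 1`, i.e. `ν_M = q^n + q - 2`. -/
theorem minimum_distance_Lambda_one {n : ℕ} (hn : 1 ≤ n)
    {F : Type*} [Field F] [Fintype F]
    (M : Matrix (Fin (n + 1)) (Fin (n + 1)) F)
    (hM : ∀ c : F, M ≠ c • (1 : Matrix (Fin (n + 1)) (Fin (n + 1)) F)) :
    (((Fintype.card F : ℤ)) ^ (n - 1) * ((Fintype.card F : ℤ) ^ (n + 1) - 1)
        - (Fintype.card F : ℤ) ^ (n - 1) *
          (Set.ncard {ξ : Fin (n + 1) → F | ξ ≠ 0 ∧ ∃ c : F, Matrix.vecMul ξ M = c • ξ} : ℤ)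
      ≥ ((Fintype.card F : ℤ) - 1) *
          ((Fintype.card F : ℤ) ^ (2 * n - 1) - (Fintype.card F : ℤ) ^ (n - 1))) ∧
    (((Fintype.card F : ℤ)) ^ (n - 1) * ((Fintype.card F : ℤ) ^ (n + 1) - 1)
        - (Fintype.card F : ℤ) ^ (n - 1) *
          (Set.ncard {ξ : Fin (n + 1) → F | ξ ≠ 0 ∧ ∃ c : F, Matrix.vecMul ξ M = c • ξ} : ℤ)
      = ((Fintype.card F : ℤ) - 1) *
          ((Fintype.card F : ℤ) ^ (2 * n - 1) - (Fintype.card F : ℤ) ^ (n - 1))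
      ↔ Set.ncard {ξ : Fin (n + 1) → F | ξ ≠ 0 ∧ ∃ c : F, Matrix.vecMul ξ M = c • ξ}
          = (Fintype.card F) ^ n + Fintype.card F - 2) :=
  minimum_distance_Lambda_one_general M hM
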